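/- arXiv:1804.01447 — 3 statements merged into one kernel-verified Lean document; each statement's English description precedes it below -/
import Mathlib

section
/- Let a, t, i, j, k be non-negative integers with a ≤ t and j ≤ k. Then ∑_{ℓ=0}^{ka−1} 1/(kt + i − ℓ) ≥ ∑_{ℓ=0}^{ja−1} 1/(jt + i − ℓ), where the sums are over real reciprocals (each denominator kt + i − ℓ with 0 ≤ ℓ ≤ ka − 1 is a positive integer since a ≤ t, and similarly for the right-hand side). -/
open Finset

private lemma per_term (M m n r : ℕ) (hM : 1 ≤ M) (hr : r < m) :
    (1:ℝ)/((M:ℝ)+1+r) - 1/((M:ℝ)+n+1+r) ≤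
      (n:ℝ)*((m:ℝ)-r)/(((M:ℝ)+r)*((M:ℝ)+m+n+1))
      - (n:ℝ)*((m:ℝ)-(r+1))/(((M:ℝ)+(r+1))*((M:ℝ)+m+n+1)) := by
  have hM' : (1:ℝ) ≤ (M:ℝ) := by exact_mod_cast hM
  have hr0 : (0:ℝ) ≤ (r:ℝ) := Nat.cast_nonneg r
  have hn0 : (0:ℝ) ≤ (n:ℝ) := Nat.cast_nonneg n
  have h1 : (0:ℝ) < (M:ℝ)+1+r := by linarith
  have h2 : (0:ℝ) < (M:ℝ)+n+1+r := by linarith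
  have h3 : (0:ℝ) < (M:ℝ)+r := by linarith
  have h4 : (0:ℝ) < (M:ℝ)+r+1 := by linarith
  have h5 : (0:ℝ) < (M:ℝ)+m+n+1 := by
    have : (0:ℝ) ≤ (m:ℝ) := Nat.cast_nonneg m
    linarith
  have hrm : (r:ℝ) + 1 ≤ (m:ℝ) := by exact_mod_cast hr
  have key : ((n:ℝ)*((m:ℝ)-r)/(((M:ℝ)+r)*((M:ℝ)+m+n+1))
      - (n:ℝ)*((m:ℝ)-(r+1))/(((M:ℝ)+(r+1))*((M:ℝ)+m+n+1)))
      - ((1:ℝ)/((M:ℝ)+1+r) - 1/((M:ℝ)+n+1+r))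
      = (n:ℝ)*((n:ℝ)+1)*((m:ℝ)-r)
        / (((M:ℝ)+m+n+1)*(((M:ℝ)+r)*(((M:ℝ)+r+1)*((M:ℝ)+n+1+r)))) := by
    have e1 : (M:ℝ)+1+r = (M:ℝ)+r+1 := by ring
    field_simp
    ring
  have hnum : (0:ℝ) ≤ (n:ℝ)*((n:ℝ)+1)*((m:ℝ)-r) := by
    have : (0:ℝ) ≤ (m:ℝ)-r := by linarith
    positivity
  have hden : (0:ℝ) < ((M:ℝ)+m+n+1)*(((M:ℝ)+r)*(((M:ℝ)+r+1)*((M:ℝ)+n+1+r))) := by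
    positivity
  have : (0:ℝ) ≤ (n:ℝ)*((n:ℝ)+1)*((m:ℝ)-r)
        / (((M:ℝ)+m+n+1)*(((M:ℝ)+r)*(((M:ℝ)+r+1)*((M:ℝ)+n+1+r)))) :=
    div_nonneg hnum hden.le
  linarith [key]

private lemma core (M m n : ℕ) (hM : m * n ≤ M) :
    ∑ r ∈ range m, (1:ℝ)/((M:ℝ)+1+r) ≤
      ∑ r ∈ range (m+1), (1:ℝ)/((M:ℝ)+n+1+r) := by
  rcases Nat.eq_zero_or_pos m with hm | hm
  · subst hm
    simp only [range_zero, sum_empty]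
    apply sum_nonneg
    intro r _
    have : (0:ℝ) ≤ (M:ℝ) := Nat.cast_nonneg M
    have : (0:ℝ) ≤ (r:ℝ) := Nat.cast_nonneg r
    have : (0:ℝ) ≤ (n:ℝ) := Nat.cast_nonneg n
    positivity
  rcases Nat.eq_zero_or_pos n with hn | hn
  · subst hn
    rw [Finset.sum_range_succ]
    have he : ∑ r ∈ range m, (1:ℝ)/((M:ℝ)+1+r)
        = ∑ r ∈ range m, (1:ℝ)/((M:ℝ)+(0:ℕ)+1+r) := by
      apply Finset.sum_congr rfl
      intro r _
      norm_num
    rw [← he]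
    have : (0:ℝ) ≤ (1:ℝ)/((M:ℝ)+(0:ℕ)+1+m) := by
      have : (0:ℝ) ≤ (M:ℝ) := Nat.cast_nonneg M
      have : (0:ℝ) ≤ (m:ℝ) := Nat.cast_nonneg m
      positivity
    linarith
  have hM1 : 1 ≤ M := le_trans (Nat.one_le_iff_ne_zero.mpr
    (Nat.mul_ne_zero (Nat.pos_iff_ne_zero.mp hm) (Nat.pos_iff_ne_zero.mp hn))) hM
  rw [Finset.sum_range_succ]
  set C : ℕ → ℝ := fun r => (n:ℝ)*((m:ℝ)-r)/(((M:ℝ)+r)*((M:ℝ)+m+n+1)) with hC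
  have tele : ∑ r ∈ range m, (C r - C (r+1)) = C 0 - C m := Finset.sum_range_sub' C m
  have hsum : ∑ r ∈ range m, ((1:ℝ)/((M:ℝ)+1+r) - 1/((M:ℝ)+n+1+r)) ≤ C 0 - C m := by
    rw [← tele]
    apply Finset.sum_le_sum
    intro r hrr
    have := per_term M m n r hM1 (mem_range.mp hrr)
    simp only [hC]
    push_cast
    convert this using 2
  have hC0 : C 0 = (n:ℝ)*(m:ℝ)/((M:ℝ)*((M:ℝ)+m+n+1)) := by
    simp [hC]
  have hCm : C m = 0 := by
    simp [hC]
  have hMpos : (0:ℝ) < (M:ℝ) := by exact_mod_cast hM1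
  have hm0 : (0:ℝ) ≤ (m:ℝ) := Nat.cast_nonneg m
  have hn0 : (0:ℝ) ≤ (n:ℝ) := Nat.cast_nonneg n
  have hfin : (n:ℝ)*(m:ℝ)/((M:ℝ)*((M:ℝ)+m+n+1)) ≤ 1/((M:ℝ)+n+1+m) := by
    rw [div_le_div_iff₀ (by positivity) (by positivity)]
    have hmn : (m:ℝ)*(n:ℝ) ≤ (M:ℝ) := by exact_mod_cast hM
    nlinarith
  have hsplit : ∑ r ∈ range m, ((1:ℝ)/((M:ℝ)+1+r) - 1/((M:ℝ)+n+1+r))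
      = ∑ r ∈ range m, (1:ℝ)/((M:ℝ)+1+r) - ∑ r ∈ range m, (1:ℝ)/((M:ℝ)+n+1+r) :=
    Finset.sum_sub_distrib _ _
  rw [hsplit] at hsum
  rw [hC0, hCm, sub_zero] at hsum
  linarith

private lemma ico_sum (A c : ℕ) :
    ∑ q ∈ Ico (A+1) (A+c+1), (1:ℝ)/q = ∑ r ∈ range c, (1:ℝ)/((A:ℝ)+1+r) := by
  rw [Finset.sum_Ico_eq_sum_range]
  have h : A+c+1-(A+1) = c := by omega
  rw [h]
  apply Finset.sum_congr rfl
  intro r _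
  push_cast
  ring_nf

private lemma core_ico (M m n : ℕ) (hM : m * n ≤ M) :
    ∑ q ∈ Ico (M+1) (M+m+1), (1:ℝ)/q ≤ ∑ q ∈ Ico (M+n+1) (M+n+(m+1)+1), (1:ℝ)/q := by
  rw [ico_sum M m, ico_sum (M+n) (m+1)]
  have he : ∑ r ∈ range (m+1), (1:ℝ)/(((M+n:ℕ):ℝ)+1+r)
      = ∑ r ∈ range (m+1), (1:ℝ)/((M:ℝ)+n+1+r) := by
    apply Finset.sum_congr rfl
    intro r _
    push_cast
    ring_nf
  rw [he]
  exact core M m n hM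

private lemma psi_step (i m n : ℕ) :
    ∑ q ∈ Ico (m*n+i+1) (m*n+n+i+1), (1:ℝ)/q ≤
      ∑ q ∈ Ico (m*(n+1)+i+1) (m*(n+1)+(n+1)+i+1), (1:ℝ)/q := by
  set M := m*n+i with hMdef
  have e1 : m*(n+1)+i+1 = M+m+1 := by simp [hMdef]; ring
  have e2 : m*(n+1)+(n+1)+i+1 = M+m+n+2 := by simp [hMdef]; ring
  have e3 : m*n+n+i+1 = M+n+1 := by simp [hMdef]; ring
  rw [e1, e2, e3]
  have c1 : ∑ q ∈ Ico (M+1) (M+m+1), (1:ℝ)/q + ∑ q ∈ Ico (M+m+1) (M+m+n+2), (1:ℝ)/q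
      = ∑ q ∈ Ico (M+1) (M+m+n+2), (1:ℝ)/q :=
    Finset.sum_Ico_consecutive _ (by omega) (by omega)
  have c2 : ∑ q ∈ Ico (M+1) (M+n+1), (1:ℝ)/q + ∑ q ∈ Ico (M+n+1) (M+m+n+2), (1:ℝ)/q
      = ∑ q ∈ Ico (M+1) (M+m+n+2), (1:ℝ)/q :=
    Finset.sum_Ico_consecutive _ (by omega) (by omega)
  have hc := core_ico M m n (by simp [hMdef, Nat.le_add_right])
  have e4 : M+n+(m+1)+1 = M+m+n+2 := by omega
  rw [e4] at hc
  linarith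

private lemma psi_mono (i m b t : ℕ) (hbt : b ≤ t) :
    ∑ q ∈ Ico (m*b+i+1) (m*b+b+i+1), (1:ℝ)/q ≤
      ∑ q ∈ Ico (m*t+i+1) (m*t+t+i+1), (1:ℝ)/q := by
  induction t, hbt using Nat.le_induction with
  | base => exact le_refl _
  | succ n hn ih => exact ih.trans (psi_step i m n)

private lemma F_eq (a t i m : ℕ) (hat : a ≤ t) :
    ∑ ℓ ∈ Finset.range (m * a), (1 : ℝ) / ((m : ℝ) * t + i - ℓ)
      = ∑ q ∈ Ico (m*(t-a)+i+1) (m*t+i+1), (1:ℝ)/q := by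
  have hmul : m*(t-a) + m*a = m*t := by
    rw [← Nat.mul_add, Nat.sub_add_cancel hat]
  have hb : m*t+i+1 = m*(t-a)+i+(m*a)+1 := by omega
  rw [hb, ico_sum (m*(t-a)+i) (m*a)]
  rw [← Finset.sum_range_reflect]
  apply Finset.sum_congr rfl
  intro j hj
  have hj' : j + 1 ≤ m*a := mem_range.mp hj
  have hnat : m*a - 1 - j = m*a - (j+1) := by omega
  rw [hnat]
  congr 1
  have c1 : ((m*a - (j+1) : ℕ) : ℝ) = (m:ℝ)*a - (j+1) := by
    push_cast [Nat.cast_sub hj']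
    ring
  have c2 : ((m*(t-a)+i : ℕ) : ℝ) = (m:ℝ)*t - (m:ℝ)*a + i := by
    push_cast [Nat.cast_sub hat]
    ring
  rw [c1, c2]
  ring

/-- For non-negative integers a ≤ t and j ≤ k,
∑_{ℓ=0}^{ka−1} 1/(kt+i−ℓ) ≥ ∑_{ℓ=0}^{ja−1} 1/(jt+i−ℓ). -/
theorem stmt_17 (a t i j k : ℕ) (hat : a ≤ t) (hjk : j ≤ k) :
    ∑ ℓ ∈ Finset.range (j * a), (1 : ℝ) / ((j : ℝ) * t + i - ℓ) ≤
    ∑ ℓ ∈ Finset.range (k * a), (1 : ℝ) / ((k : ℝ) * t + i - ℓ) := by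
  induction k, hjk using Nat.le_induction with
  | base => exact le_refl _
  | succ m hm ih =>
    refine ih.trans ?_
    rw [F_eq a t i m hat, F_eq a t i (m+1) hat]
    set b := t - a with hbdef
    have hbt : b ≤ t := Nat.sub_le t a
    have hpsi := psi_mono i m b t hbt
    have e1 : m*b+b = (m+1)*b := by ring
    have e2 : m*t+t = (m+1)*t := by ring
    rw [e1, e2] at hpsi
    have c1 : ∑ q ∈ Ico (m*b+i+1) ((m+1)*b+i+1), (1:ℝ)/q
        + ∑ q ∈ Ico ((m+1)*b+i+1) ((m+1)*t+i+1), (1:ℝ)/q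
        = ∑ q ∈ Ico (m*b+i+1) ((m+1)*t+i+1), (1:ℝ)/q :=
      Finset.sum_Ico_consecutive _ (by nlinarith [Nat.le_refl 0]) (by
        have : (m+1)*b ≤ (m+1)*t := Nat.mul_le_mul_left _ hbt
        omega)
    have c2 : ∑ q ∈ Ico (m*b+i+1) (m*t+i+1), (1:ℝ)/q
        + ∑ q ∈ Ico (m*t+i+1) ((m+1)*t+i+1), (1:ℝ)/q
        = ∑ q ∈ Ico (m*b+i+1) ((m+1)*t+i+1), (1:ℝ)/q :=
      Finset.sum_Ico_consecutive _ (by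
        have : m*b ≤ m*t := Nat.mul_le_mul_left _ hbt
        omega) (by
        have : m*t ≤ (m+1)*t := Nat.mul_le_mul_right _ (by omega)
        omega)
    linarith
end

section
/- Let a, b, i, j, k be non-negative integers with a ≤ b and 1 ≤ j ≤ k. Then for the real kth and jth roots of binomial coefficients one has C(kb+i, ka)^{1/k} / C(ka+i, ka)^{1/k} ≥ C(jb+i, ja)^{1/j} / C(ja+i, ja)^{1/j}; equivalently, C(kb+i, ka)^j · C(ja+i, ja)^k ≥ C(jb+i, ja)^k · C(ka+i, ka)^j. -/
open Finset Nat

lemma Lmod (m l : ℕ) (hm : 1 ≤ m) :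
    (l + 1) % m = if l % m + 1 = m then 0 else l % m + 1 := by
  have hd := Nat.mod_add_div l m
  have h1 : l % m < m := Nat.mod_lt _ hm
  split_ifs with h
  · have : l + 1 = m * (l / m + 1) := by rw [Nat.mul_add, Nat.mul_one]; omega
    rw [this, Nat.mul_mod_right]
  · have : l + 1 = (l % m + 1) + m * (l / m) := by omega
    rw [this, Nat.add_mul_mod_self_left, Nat.mod_eq_of_lt (by omega)]

lemma L1 (m : ℕ) (hm : 1 ≤ m) : ∀ l : ℕ,
    2 * (∑ r ∈ range l, r % m) + (l % m) * (m - l % m) = l * (m - 1) := by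
  intro l
  induction l with
  | zero => simp
  | succ l ih =>
    rw [Finset.sum_range_succ, Lmod m l hm]
    have h1 : l % m < m := Nat.mod_lt _ hm
    split_ifs with h
    · zify [hm, h1.le] at ih ⊢
      have h' := congrArg (Nat.cast (R := ℤ)) h; push_cast at h'
      linear_combination ih + ((l : ℤ) % m + 1) * h'
    · zify [hm, h1.le, show l % m + 1 ≤ m from h1] at ih ⊢
      linear_combination ih

lemma L2 (m δ Q ρ ρ' : ℕ) (hm : 1 ≤ m) (hρ : ρ < m) (hρ' : ρ' < m + 1)
    (heq : ρ + m * δ = (m + 1) * Q + ρ') :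
    ρ * (m - ρ) ≤ ρ + m * δ + ρ' * (m + 1 - ρ') := by
  have hQδ : Q ≤ δ := by nlinarith
  have hs : ρ' ≤ m + 1 := by omega
  rcases Nat.eq_or_lt_of_le hQδ with hQ | hQ
  · subst hQ
    have hρδ : ρ = Q + ρ' := by nlinarith
    zify [hρ.le, hs] at *
    nlinarith
  · have hD : ((m : ℤ) + 1) * ((δ : ℤ) - Q) = (δ : ℤ) - ρ + ρ' := by
      have := congrArg (Nat.cast (R := ℤ)) heq; push_cast at this; linarith
    have hD1 : (1 : ℤ) ≤ (δ : ℤ) - Q := by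
      have : (Q : ℤ) < δ := by exact_mod_cast hQ
      linarith
    have hρ'm : ((ρ' : ℤ)) ≤ m := by exact_mod_cast Nat.lt_succ_iff.mp hρ'
    zify [hρ.le, hs] at *
    nlinarith [mul_le_mul_of_nonneg_left hρ'm (by positivity : (0:ℤ) ≤ (ρ' : ℤ)),
      mul_le_mul_of_nonneg_left hD1 (by positivity : (0:ℤ) ≤ (m:ℤ) * ((m:ℤ)+1))]

lemma L3 (m l : ℕ) (hm : 1 ≤ m) :
    (∑ r ∈ range l, r % (m + 1)) ≤ (∑ r ∈ range l, r % m) + l := by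
  have key2 : (l % m) * (m - l % m) ≤ l + (l % (m + 1)) * (m + 1 - l % (m + 1)) := by
    set ρ := l % m with hρdef
    set ρ' := l % (m + 1) with hρ'def
    set t := l / m with htdef
    set δ := t % (m + 1) with hδdef
    have hρ : ρ < m := Nat.mod_lt _ hm
    have hρ' : ρ' < m + 1 := Nat.mod_lt _ (by omega)
    have hl : l = m * t + ρ := (Nat.div_add_mod l m).symm
    have ht : t = (m + 1) * (t / (m + 1)) + δ := (Nat.div_add_mod t (m + 1)).symm
    have e1 : l = (m + 1) * (m * (t / (m + 1))) + (ρ + m * δ) := by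
      nth_rewrite 1 [hl, ht]; ring
    have e2 : ρ' = (ρ + m * δ) % (m + 1) := by
      rw [hρ'def]; nth_rewrite 1 [e1]; rw [Nat.mul_add_mod]
    have heq : ρ + m * δ = (m + 1) * ((ρ + m * δ) / (m + 1)) + ρ' := by
      rw [e2]; exact (Nat.div_add_mod _ _).symm
    have key := L2 m δ _ ρ ρ' hm hρ hρ' heq
    have hδt : m * δ ≤ m * t := Nat.mul_le_mul_left m (Nat.mod_le _ _)
    have hmt : m * t ≤ l := by omega
    calc ρ * (m - ρ) ≤ ρ + m * δ + ρ' * (m + 1 - ρ') := key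
      _ ≤ l + ρ' * (m + 1 - ρ') := by omega
  have h1 := L1 m hm l
  have h2 := L1 (m + 1) (by omega) l
  rw [Nat.add_sub_cancel] at h2
  have hlm : l * (m - 1) + l = l * m := by
    cases m with
    | zero => omega
    | succ n => rw [Nat.succ_sub_one, Nat.mul_succ]
  omega

lemma L4 (j k l : ℕ) (hj : 1 ≤ j) (hjk : j ≤ k) :
    (∑ r ∈ range l, r % k) ≤ (∑ r ∈ range l, r % j) + (k - j) * l := by
  induction k, hjk using Nat.le_induction with
  | base => simp
  | succ k hk ih =>
    have := L3 k l (le_trans hj hk)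
    have hsub : (k + 1 - j) * l = (k - j) * l + l := by
      rw [Nat.succ_sub (by omega), Nat.succ_mul]
    omega

lemma L5 (i j k l : ℕ) (hj : 1 ≤ j) (hjk : j ≤ k) :
    ∑ r ∈ range l, j * (i + r / j + 1) ≤ ∑ r ∈ range l, k * (i + r / k + 1) := by
  have key : ∀ m r : ℕ, m * (i + r / m + 1) + r % m = m * (i + 1) + r := by
    intro m r
    have h := Nat.div_add_mod r m
    rw [Nat.mul_add, Nat.mul_add, Nat.mul_one, Nat.mul_add, Nat.mul_one]
    omega
  have S : ∀ m : ℕ, (∑ r ∈ range l, m * (i + r / m + 1)) + (∑ r ∈ range l, r % m)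
      = l * (m * (i + 1)) + ∑ r ∈ range l, r := by
    intro m
    rw [← Finset.sum_add_distrib]
    simp_rw [key m]
    rw [Finset.sum_add_distrib, Finset.sum_const, card_range, smul_eq_mul]
  have S1 := S j
  have S2 := S k
  have h4 := L4 j k l hj hjk
  obtain ⟨d, rfl⟩ := Nat.exists_eq_add_of_le hjk
  have hd : j + d - j = d := by omega
  rw [hd] at h4
  have expand : l * ((j + d) * (i + 1)) = l * (j * (i + 1)) + l * (d * (i + 1)) := by ring
  have hdl : d * l ≤ l * (d * (i + 1)) := by
    calc d * l ≤ d * l + d * l * i := Nat.le_add_right _ _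
      _ = l * (d * (i + 1)) := by ring
  omega

lemma L8 (f : ℕ → ℝ) (c : ℕ) (hc : 1 ≤ c) : ∀ M : ℕ,
    ∑ r ∈ range (c * M), f (r / c) = (c : ℝ) * ∑ t ∈ range M, f t := by
  intro M
  induction M with
  | zero => simp
  | succ M ih =>
    rw [Nat.mul_succ, Finset.sum_range_add, ih, Finset.sum_range_succ]
    have : ∀ x ∈ range c, f ((c * M + x) / c) = f M := by
      intro x hx
      rw [Nat.mul_add_div (by omega)]
      rw [Nat.div_eq_of_lt (mem_range.mp hx), Nat.add_zero]
    rw [Finset.sum_congr rfl this, Finset.sum_const, card_range, nsmul_eq_mul]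
    ring

-- Abel summation positivity lemma
lemma L7 : ∀ (N : ℕ) (s d : ℕ → ℝ),
    (∀ r r', r ≤ r' → r' < N → s r ≤ s r') →
    (∀ r, r < N → s r ≤ 0) →
    (∀ l, l ≤ N → (∑ r ∈ range l, d r) ≤ 0) →
    0 ≤ ∑ r ∈ range N, s r * d r := by
  intro N
  induction N with
  | zero => intro s d _ _ _; simp
  | succ N ih =>
    intro s d hmono hneg hpre
    have hIH := ih (fun r => s r - s N) d
      (fun r r' h h' => by linarith [hmono r r' h (by omega)])
      (fun r h => by linarith [hmono r N (by omega) (by omega)])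
      (fun l h => hpre l (by omega))
    have expand : ∑ r ∈ range N, (s r - s N) * d r
        = (∑ r ∈ range N, s r * d r) - s N * (∑ r ∈ range N, d r) := by
      rw [Finset.mul_sum, ← Finset.sum_sub_distrib]
      exact Finset.sum_congr rfl (fun x _ => by ring)
    rw [expand] at hIH
    have hP := hpre (N + 1) le_rfl
    rw [Finset.sum_range_succ] at hP
    have hsN := hneg N (by omega)
    have h2 : 0 ≤ s N * ((∑ r ∈ range N, d r) + d N) := by nlinarith
    rw [Finset.sum_range_succ]
    nlinarith [h2]

-- tangent line inequality for ψ(x) = log(A+x) - log x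
lemma L6 (A u v : ℝ) (hA : 0 ≤ A) (hu : 0 < u) (hv : 0 < v) :
    Real.log (A + v) - Real.log v + (-(A / ((A + v) * v))) * (u - v)
      ≤ Real.log (A + u) - Real.log u := by
  have hAu : 0 < A + u := by linarith
  have hAv : 0 < A + v := by linarith
  -- step 1 : log(A+u) - log u - (log(A+v) - log v) = log T , T = ((A+u)*v)/((A+v)*u)
  have hT : 0 < ((A + u) * v) / ((A + v) * u) := by positivity
  have e1 : Real.log (A + u) - Real.log u - (Real.log (A + v) - Real.log v)
      = Real.log (((A + u) * v) / ((A + v) * u)) := by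
    rw [Real.log_div (by positivity) (by positivity), Real.log_mul (by positivity) (by positivity),
      Real.log_mul (by positivity) (by positivity)]
    ring
  -- step 2 : log T ≥ 1 - 1/T
  have e2 : 1 - ((A + v) * u) / ((A + u) * v) ≤ Real.log (((A + u) * v) / ((A + v) * u)) := by
    have h := Real.log_le_sub_one_of_pos (show 0 < ((A + v) * u) / ((A + u) * v) by positivity)
    have hinv : Real.log (((A + v) * u) / ((A + u) * v))
        = - Real.log (((A + u) * v) / ((A + v) * u)) := by
      rw [← Real.log_inv]
      congr 1
      field_simp
    rw [hinv] at h
    have : ((A + v) * u) / ((A + u) * v) - 1 = -(1 - ((A + v) * u) / ((A + u) * v)) := by ring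
    linarith
  -- step 3 : 1 - 1/T = A(v-u)/((A+u)v) ≥ A(v-u)/((A+v)v)
  have e3 : 1 - ((A + v) * u) / ((A + u) * v) = A * (v - u) / ((A + u) * v) := by
    field_simp
    ring
  have e4 : A * (v - u) / ((A + v) * v) ≤ A * (v - u) / ((A + u) * v) := by
    rw [div_le_div_iff₀ (by positivity) (by positivity)]
    nlinarith [mul_nonneg (mul_nonneg hA hv.le) (sq_nonneg (v - u))]
  have e5 : (-(A / ((A + v) * v))) * (u - v) = A * (v - u) / ((A + v) * v) := by
    field_simp
    ring
  linarith [e1, e2, e3, e4, e5]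

lemma Lfac (e : ℕ) : ∀ d : ℕ, e ! * ∏ t ∈ range d, (e + 1 + t) = (e + d)! := by
  intro d
  induction d with
  | zero => simp
  | succ d ih =>
    rw [Finset.prod_range_succ, ← Nat.mul_assoc, ih,
      show e + (d + 1) = (e + d) + 1 from rfl, Nat.factorial_succ]
    ring

lemma Lprod (a c i m : ℕ) :
    (m * (a + c) + i).choose (m * a) * ∏ t ∈ range (m * c), (i + 1 + t)
      = (m * a + i).choose (m * a) * ∏ t ∈ range (m * c), (m * a + i + 1 + t) := by
  set n1 := (m * (a + c) + i).choose (m * a) with hn1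
  set n2 := (m * a + i).choose (m * a) with hn2
  set P1 := ∏ t ∈ range (m * c), (i + 1 + t) with hP1
  set P2 := ∏ t ∈ range (m * c), (m * a + i + 1 + t) with hP2
  have hle : m * a ≤ m * (a + c) + i := by
    have : m * a ≤ m * (a + c) := Nat.mul_le_mul_left m (by omega)
    omega
  have hsub1 : m * (a + c) + i - m * a = m * c + i := by rw [Nat.mul_add]; omega
  have h1 : n1 * (m * a)! * (m * c + i)! = (m * (a + c) + i)! := by
    have := Nat.choose_mul_factorial_mul_factorial hle
    rwa [hsub1] at this
  have h2 : n2 * (m * a)! * i ! = (m * a + i)! := by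
    have := Nat.choose_mul_factorial_mul_factorial (Nat.le_add_right (m * a) i)
    rwa [Nat.add_sub_cancel_left] at this
  have e5 : (m * a + i)! * P2 = (m * (a + c) + i)! := by
    rw [hP2]
    have : ∀ t, m * a + i + 1 + t = (m * a + i) + 1 + t := fun t => by ring
    rw [Lfac (m * a + i) (m * c)]
    congr 1
    ring
  have e6 : i ! * P1 = (m * c + i)! := by
    rw [hP1, Lfac i (m * c)]
    congr 1
    ring
  have H : ((m * a)! * i !) * (n1 * P1) = ((m * a)! * i !) * (n2 * P2) := by
    calc ((m * a)! * i !) * (n1 * P1) = n1 * (m * a)! * (i ! * P1) := by ring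
      _ = n1 * (m * a)! * (m * c + i)! := by rw [e6]
      _ = (m * (a + c) + i)! := h1
      _ = (m * a + i)! * P2 := e5.symm
      _ = n2 * (m * a)! * i ! * P2 := by rw [h2]
      _ = ((m * a)! * i !) * (n2 * P2) := by ring
  exact Nat.eq_of_mul_eq_mul_left (Nat.mul_pos (Nat.factorial_pos _) (Nat.factorial_pos _)) H

lemma Llog (a c i m : ℕ) :
    Real.log (((m * (a + c) + i).choose (m * a) : ℝ))
      - Real.log (((m * a + i).choose (m * a) : ℝ))
    = ∑ t ∈ range (m * c),
        (Real.log ((m * a + i + t + 1 : ℕ) : ℝ) - Real.log ((i + t + 1 : ℕ) : ℝ)) := by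
  have hc := Lprod a c i m
  have hcast : ((m * (a + c) + i).choose (m * a) : ℝ) * ∏ t ∈ range (m * c), ((i + 1 + t : ℕ) : ℝ)
      = ((m * a + i).choose (m * a) : ℝ) * ∏ t ∈ range (m * c), ((m * a + i + 1 + t : ℕ) : ℝ) := by
    exact_mod_cast congrArg (Nat.cast (R := ℝ)) hc
  have hn1 : (0 : ℝ) < ((m * (a + c) + i).choose (m * a) : ℝ) := by
    have : m * a ≤ m * (a + c) + i := by
      have : m * a ≤ m * (a + c) := Nat.mul_le_mul_left m (by omega)
      omega
    exact_mod_cast Nat.choose_pos this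
  have hn2 : (0 : ℝ) < ((m * a + i).choose (m * a) : ℝ) := by
    exact_mod_cast Nat.choose_pos (Nat.le_add_right (m * a) i)
  have hpos1 : ∀ t ∈ range (m * c), ((i + 1 + t : ℕ) : ℝ) ≠ 0 := by
    intro t _; positivity
  have hpos2 : ∀ t ∈ range (m * c), ((m * a + i + 1 + t : ℕ) : ℝ) ≠ 0 := by
    intro t _
    have h0 : (0:ℕ) < m * a + i + 1 + t := by omega
    have : (0:ℝ) < ((m * a + i + 1 + t : ℕ) : ℝ) := by exact_mod_cast h0
    exact this.ne'
  have hlog := congrArg Real.log hcast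
  rw [Real.log_mul hn1.ne' (Finset.prod_ne_zero_iff.mpr hpos1),
      Real.log_mul hn2.ne' (Finset.prod_ne_zero_iff.mpr hpos2),
      Real.log_prod hpos1, Real.log_prod hpos2] at hlog
  rw [Finset.sum_sub_distrib]
  have r1 : ∀ t, ((m * a + i + t + 1 : ℕ) : ℝ) = ((m * a + i + 1 + t : ℕ) : ℝ) := by
    intro t; congr 1; omega
  have r2 : ∀ t, ((i + t + 1 : ℕ) : ℝ) = ((i + 1 + t : ℕ) : ℝ) := by
    intro t; congr 1; omega
  simp_rw [r1, r2]
  linarith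

/-- For non-negative integers a ≤ b and 1 ≤ j ≤ k,
C(kb+i, ka)^{1/k} / C(ka+i, ka)^{1/k} ≥ C(jb+i, ja)^{1/j} / C(ja+i, ja)^{1/j}
(real k-th and j-th roots); equivalently,
C(kb+i, ka)^j · C(ja+i, ja)^k ≥ C(jb+i, ja)^k · C(ka+i, ka)^j. -/
theorem stmt_18 (a b i j k : ℕ) (hab : a ≤ b) (hj : 1 ≤ j) (hjk : j ≤ k) :
    ((((j * b + i).choose (j * a) : ℝ) ^ ((1 : ℝ) / j)) /
        (((j * a + i).choose (j * a) : ℝ) ^ ((1 : ℝ) / j)) ≤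
      (((k * b + i).choose (k * a) : ℝ) ^ ((1 : ℝ) / k)) /
        (((k * a + i).choose (k * a) : ℝ) ^ ((1 : ℝ) / k))) ∧
    ((j * b + i).choose (j * a)) ^ k * ((k * a + i).choose (k * a)) ^ j ≤
      ((k * b + i).choose (k * a)) ^ j * ((j * a + i).choose (j * a)) ^ k := by
  obtain ⟨c, rfl⟩ := Nat.exists_eq_add_of_le hab
  have hk : 1 ≤ k := le_trans hj hjk
  have hj0 : (0:ℝ) < j := by exact_mod_cast hj
  have hk0 : (0:ℝ) < k := by exact_mod_cast hk
  have hle : ∀ m : ℕ, m * a ≤ m * (a + c) + i := fun m =>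
    le_trans (Nat.mul_le_mul_left m (Nat.le_add_right a c)) (Nat.le_add_right _ i)
  have hCb : ∀ m : ℕ, (0:ℝ) < ((m * (a + c) + i).choose (m * a) : ℝ) := fun m => by
    exact_mod_cast Nat.choose_pos (hle m)
  have hCa : ∀ m : ℕ, (0:ℝ) < ((m * a + i).choose (m * a) : ℝ) := fun m => by
    exact_mod_cast Nat.choose_pos (Nat.le_add_right (m * a) i)
  set A : ℝ := (a : ℝ) with hA
  have hA0 : 0 ≤ A := Nat.cast_nonneg a
  set ψ : ℝ → ℝ := fun x => Real.log (A + x) - Real.log x with hψ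
  -- log-ratio formula
  have hGm : ∀ m : ℕ, 1 ≤ m →
      Real.log (((m * (a + c) + i).choose (m * a) : ℝ))
        - Real.log (((m * a + i).choose (m * a) : ℝ))
      = ∑ t ∈ range (m * c), ψ (((i : ℝ) + t + 1) / m) := by
    intro m hm
    rw [Llog a c i m]
    apply Finset.sum_congr rfl
    intro t _
    have hm0 : (0:ℝ) < m := by exact_mod_cast hm
    have e1 : A + ((i:ℝ) + t + 1) / m = ((m * a + i + t + 1 : ℕ) : ℝ) / m := by
      rw [hA]; push_cast; field_simp; ring
    have e2 : ((i:ℝ) + t + 1) / m = ((i + t + 1 : ℕ) : ℝ) / m := by push_cast; ring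
    have hp1 : (0:ℝ) < ((m * a + i + t + 1 : ℕ) : ℝ) := by
      exact_mod_cast Nat.succ_pos (m * a + i + t)
    have hp2 : (0:ℝ) < ((i + t + 1 : ℕ) : ℝ) := by exact_mod_cast Nat.succ_pos (i + t)
    simp only [hψ]
    rw [e1, e2, Real.log_div hp1.ne' hm0.ne', Real.log_div hp2.ne' hm0.ne']
    ring
  -- the sequences
  set X : ℕ → ℝ := fun r => ((i : ℝ) + (r / j : ℕ) + 1) / k with hX
  set Y : ℕ → ℝ := fun r => ((i : ℝ) + (r / k : ℕ) + 1) / j with hY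
  set N := j * (k * c) with hN
  have hXpos : ∀ r, 0 < X r := fun r => by
    rw [hX]; exact div_pos (by positivity) hk0
  have hYpos : ∀ r, 0 < Y r := fun r => by
    rw [hY]; exact div_pos (by positivity) hj0
  have hYmono : ∀ r r' : ℕ, r ≤ r' → Y r ≤ Y r' := by
    intro r r' h
    rw [hY]
    have : ((r / k : ℕ) : ℝ) ≤ ((r' / k : ℕ) : ℝ) := by
      exact_mod_cast Nat.div_le_div_right h
    exact div_le_div_of_nonneg_right (by linarith) hj0.le
  -- slope sequence
  set sl : ℕ → ℝ := fun r => -(A / ((A + Y r) * Y r)) with hsl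
  have hsneg : ∀ r, r < N → sl r ≤ 0 := by
    intro r _
    rw [hsl]
    simp only
    have := hYpos r
    have h1 : 0 < (A + Y r) * Y r := by nlinarith
    exact neg_nonpos.mpr (div_nonneg hA0 h1.le)
  have hsmono : ∀ r r' : ℕ, r ≤ r' → r' < N → sl r ≤ sl r' := by
    intro r r' h _
    rw [hsl]
    simp only
    have h1 := hYpos r
    have h2 := hYpos r'
    have h3 := hYmono r r' h
    have h4 : 0 < (A + Y r) * Y r := by nlinarith
    have h5 : (A + Y r) * Y r ≤ (A + Y r') * Y r' := by nlinarith
    have := div_le_div_of_nonneg_left hA0 h4 h5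
    linarith
  -- prefix sums
  have hpre : ∀ l, l ≤ N → (∑ r ∈ range l, (X r - Y r)) ≤ 0 := by
    intro l _
    rw [Finset.sum_sub_distrib]
    have hnat := L5 i j k l hj hjk
    have eX : ∑ r ∈ range l, X r
        = ((∑ r ∈ range l, j * (i + r / j + 1) : ℕ) : ℝ) / (j * k) := by
      push_cast
      rw [Finset.sum_div]
      apply Finset.sum_congr rfl
      intro r _
      rw [hX]
      simp only
      rw [div_eq_div_iff hk0.ne' (by positivity)]
      ring
    have eY : ∑ r ∈ range l, Y r
        = ((∑ r ∈ range l, k * (i + r / k + 1) : ℕ) : ℝ) / (j * k) := by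
      push_cast
      rw [Finset.sum_div]
      apply Finset.sum_congr rfl
      intro r _
      rw [hY]
      simp only
      rw [div_eq_div_iff hj0.ne' (by positivity)]
      ring
    rw [eX, eY]
    have hc : ((∑ r ∈ range l, j * (i + r / j + 1) : ℕ) : ℝ)
        ≤ ((∑ r ∈ range l, k * (i + r / k + 1) : ℕ) : ℝ) := by exact_mod_cast hnat
    have := div_le_div_of_nonneg_right hc (by positivity : (0:ℝ) ≤ (j:ℝ) * k)
    linarith
  -- tangent bound and Abel
  have habel := L7 N sl (fun r => X r - Y r) hsmono hsneg hpre
  have htan : ∀ r ∈ range N, ψ (Y r) + sl r * (X r - Y r) ≤ ψ (X r) := by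
    intro r _
    have := L6 A (X r) (Y r) hA0 (hXpos r) (hYpos r)
    simp only [hψ, hsl]
    linarith
  have hsum : ∑ r ∈ range N, ψ (Y r) ≤ ∑ r ∈ range N, ψ (X r) := by
    have h1 := Finset.sum_le_sum htan
    rw [Finset.sum_add_distrib] at h1
    linarith
  -- reindex
  have hSX : ∑ r ∈ range N, ψ (X r) = (j : ℝ) * ∑ t ∈ range (k * c), ψ (((i:ℝ) + t + 1) / k) :=
    L8 (fun t => ψ (((i:ℝ) + t + 1) / k)) j hj (k * c)
  have hSY : ∑ r ∈ range N, ψ (Y r) = (k : ℝ) * ∑ t ∈ range (j * c), ψ (((i:ℝ) + t + 1) / j) := by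
    rw [hN, show j * (k * c) = k * (j * c) by ring]
    exact L8 (fun t => ψ (((i:ℝ) + t + 1) / j)) k hk (j * c)
  set Gj : ℝ := Real.log (((j * (a + c) + i).choose (j * a) : ℝ))
      - Real.log (((j * a + i).choose (j * a) : ℝ)) with hGj
  set Gk : ℝ := Real.log (((k * (a + c) + i).choose (k * a) : ℝ))
      - Real.log (((k * a + i).choose (k * a) : ℝ)) with hGk
  have KEY : (k : ℝ) * Gj ≤ (j : ℝ) * Gk := by
    rw [hGj, hGk, hGm j hj, hGm k hk]
    rw [← hSX, ← hSY]
    exact hsum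
  constructor
  · -- rpow part
    have hd1 : ((j * (a + c) + i).choose (j * a) : ℝ) ^ ((1:ℝ)/j)
        / ((j * a + i).choose (j * a) : ℝ) ^ ((1:ℝ)/j)
        = (((j * (a + c) + i).choose (j * a) : ℝ) / ((j * a + i).choose (j * a) : ℝ)) ^ ((1:ℝ)/j) := by
      rw [Real.div_rpow (hCb j).le (hCa j).le]
    have hd2 : ((k * (a + c) + i).choose (k * a) : ℝ) ^ ((1:ℝ)/k)
        / ((k * a + i).choose (k * a) : ℝ) ^ ((1:ℝ)/k)
        = (((k * (a + c) + i).choose (k * a) : ℝ) / ((k * a + i).choose (k * a) : ℝ)) ^ ((1:ℝ)/k) := by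
      rw [Real.div_rpow (hCb k).le (hCa k).le]
    rw [hd1, hd2]
    have hgj : (0:ℝ) < ((j * (a + c) + i).choose (j * a) : ℝ) / ((j * a + i).choose (j * a) : ℝ) :=
      div_pos (hCb j) (hCa j)
    have hgk : (0:ℝ) < ((k * (a + c) + i).choose (k * a) : ℝ) / ((k * a + i).choose (k * a) : ℝ) :=
      div_pos (hCb k) (hCa k)
    rw [Real.rpow_def_of_pos hgj, Real.rpow_def_of_pos hgk]
    apply Real.exp_le_exp.mpr
    have lgj : Real.log (((j * (a + c) + i).choose (j * a) : ℝ) / ((j * a + i).choose (j * a) : ℝ)) = Gj := by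
      rw [Real.log_div (hCb j).ne' (hCa j).ne', hGj]
    have lgk : Real.log (((k * (a + c) + i).choose (k * a) : ℝ) / ((k * a + i).choose (k * a) : ℝ)) = Gk := by
      rw [Real.log_div (hCb k).ne' (hCa k).ne', hGk]
    rw [lgj, lgk]
    rw [mul_one_div, mul_one_div, div_le_div_iff₀ hj0 hk0]
    nlinarith [KEY]
  · -- nat power part
    have hpow : (((j * (a + c) + i).choose (j * a) : ℝ) / ((j * a + i).choose (j * a) : ℝ)) ^ k
        ≤ (((k * (a + c) + i).choose (k * a) : ℝ) / ((k * a + i).choose (k * a) : ℝ)) ^ j := by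
      have hgj : (0:ℝ) < ((j * (a + c) + i).choose (j * a) : ℝ) / ((j * a + i).choose (j * a) : ℝ) :=
        div_pos (hCb j) (hCa j)
      have hgk : (0:ℝ) < ((k * (a + c) + i).choose (k * a) : ℝ) / ((k * a + i).choose (k * a) : ℝ) :=
        div_pos (hCb k) (hCa k)
      rw [← Real.log_le_log_iff (by positivity) (by positivity)]
      rw [Real.log_pow, Real.log_pow,
        Real.log_div (hCb j).ne' (hCa j).ne', Real.log_div (hCb k).ne' (hCa k).ne']
      rw [← hGj, ← hGk]
      exact KEY
    rw [div_pow, div_pow, div_le_div_iff₀ (pow_pos (hCa j) k) (pow_pos (hCa k) j)] at hpow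
    have : (((j * (a + c) + i).choose (j * a) : ℝ)) ^ k * (((k * a + i).choose (k * a) : ℝ)) ^ j
        ≤ (((k * (a + c) + i).choose (k * a) : ℝ)) ^ j * (((j * a + i).choose (j * a) : ℝ)) ^ k := hpow
    exact_mod_cast this
end

section
/- Let a, b, k be non-negative integers with b > a ≥ 1. Then for every integer i with 0 ≤ i ≤ ka one has C(kb+i, ka) / C(ka+i, ka) ≥ ((b+a)/(2a))^{ka}, where the left-hand side is a ratio of binomial coefficients and the right-hand side a real power. -/
open Finset Nat

/-- For non-negative integers b > a ≥ 1 and k, and every 0 ≤ i ≤ ka,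
C(kb+i, ka) / C(ka+i, ka) ≥ ((b+a)/(2a))^{ka}. -/
theorem stmt_19 (a b k : ℕ) (ha : 1 ≤ a) (hab : a < b) (i : ℕ) (hi : i ≤ k * a) :
    (((b : ℝ) + a) / (2 * a)) ^ (k * a) ≤
      ((k * b + i).choose (k * a) : ℝ) / ((k * a + i).choose (k * a) : ℝ) := by
  have hn : True := trivial
  have hkab : k * a ≤ k * b := Nat.mul_le_mul_left k hab.le
  have hprod : ((k * b + i).choose (k * a) : ℝ) / ((k * a + i).choose (k * a) : ℝ)
      = ∏ j ∈ range (k * a), (((k * b + i - j : ℕ) : ℝ) / ((k * a + i - j : ℕ) : ℝ)) := by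
    have h1 : ((k * b + i).descFactorial (k * a) : ℝ) = ((k * a) ! : ℝ) * ((k * b + i).choose (k * a) : ℝ) := by
      exact_mod_cast congrArg Nat.cast (Nat.descFactorial_eq_factorial_mul_choose _ _)
    have h2 : ((k * a + i).descFactorial (k * a) : ℝ) = ((k * a) ! : ℝ) * ((k * a + i).choose (k * a) : ℝ) := by
      exact_mod_cast congrArg Nat.cast (Nat.descFactorial_eq_factorial_mul_choose _ _)
    have hfac : ((k * a) ! : ℝ) ≠ 0 := by exact_mod_cast (k * a).factorial_ne_zero
    rw [prod_div_distrib]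
    have e1 : (∏ j ∈ range (k * a), ((k * b + i - j : ℕ) : ℝ))
        = ((k * b + i).descFactorial (k * a) : ℝ) := by
      rw [Nat.descFactorial_eq_prod_range]; push_cast [Nat.cast_prod]; rfl
    have e2 : (∏ j ∈ range (k * a), ((k * a + i - j : ℕ) : ℝ))
        = ((k * a + i).descFactorial (k * a) : ℝ) := by
      rw [Nat.descFactorial_eq_prod_range]; push_cast [Nat.cast_prod]; rfl
    rw [e1, e2, h1, h2, mul_div_mul_left _ _ hfac]
  rw [hprod]
  have hc : (0:ℝ) ≤ ((b : ℝ) + a) / (2 * a) := by positivity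
  calc (((b : ℝ) + a) / (2 * a)) ^ (k * a) = ∏ _j ∈ range (k * a), ((b : ℝ) + a) / (2 * a) := by
        rw [prod_const, card_range]
    _ ≤ ∏ j ∈ range (k * a), (((k * b + i - j : ℕ) : ℝ) / ((k * a + i - j : ℕ) : ℝ)) := by
        apply Finset.prod_le_prod (fun j _ => hc)
        intro j hj
        rw [Finset.mem_range] at hj
        have hja : j < k * a + i := lt_of_lt_of_le hj (Nat.le_add_right _ _)
        have hjb : j ≤ k * b + i := le_trans hja.le (by omega)
        rw [div_le_div_iff₀ (by positivity) (by exact_mod_cast Nat.sub_pos_of_lt hja)]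
        have h1 : ((k * a + i - j : ℕ) : ℝ) = (k:ℝ) * a + i - j := by
          push_cast [Nat.cast_sub hja.le]; ring
        have h2 : ((k * b + i - j : ℕ) : ℝ) = (k:ℝ) * b + i - j := by
          push_cast [Nat.cast_sub hjb]; ring
        rw [h1, h2]
        have hab' : (a:ℝ) + 1 ≤ b := by exact_mod_cast hab
        have hi' : (i:ℝ) ≤ k * a := by exact_mod_cast hi
        have hj' : (0:ℝ) ≤ j := by positivity
        have ha' : (1:ℝ) ≤ a := by exact_mod_cast ha
        nlinarith [mul_nonneg ((by linarith : (0:ℝ) ≤ (b:ℝ) - a)) (by linarith : (0:ℝ) ≤ (k:ℝ)*a - i + j)]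
end
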